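/- arXiv:1009.0763 — 9 statements merged into one kernel-verified Lean document; each statement's English description precedes it below -/
import Mathlib

section
/- The largest multiple of gcd(v1,v2) that is not representable as a*v1 + b*v2 with a, b nonnegative integers is lcm(v1,v2) - v1 - v2, provided v1, v2 ≥ 1 and v1 ∤ v2 and v2 ∤ v1 (i.e., neither weight divides the other, so this number is positive). -/
theorem stmt1 (v1 v2 : ℕ) (h1 : 1 ≤ v1) (h2 : 1 ≤ v2)
    (hnd1 : ¬ v1 ∣ v2) (hnd2 : ¬ v2 ∣ v1) :
    0 < Nat.lcm v1 v2 - (v1 + v2) ∧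
    Nat.gcd v1 v2 ∣ Nat.lcm v1 v2 - (v1 + v2) ∧
    (¬ ∃ a b : ℕ, a * v1 + b * v2 = Nat.lcm v1 v2 - (v1 + v2)) ∧
    ∀ k : ℕ, Nat.gcd v1 v2 ∣ k → Nat.lcm v1 v2 - (v1 + v2) < k →
      ∃ a b : ℕ, a * v1 + b * v2 = k := by
  set d := Nat.gcd v1 v2 with hd
  have hdpos : 0 < d := Nat.gcd_pos_of_pos_left v2 h1
  set x := v1 / d with hx
  set y := v2 / d with hy
  have hv1 : v1 = d * x := (Nat.div_mul_cancel (Nat.gcd_dvd_left v1 v2)).symm.trans (mul_comm _ _)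
  have hv2 : v2 = d * y := (Nat.div_mul_cancel (Nat.gcd_dvd_right v1 v2)).symm.trans (mul_comm _ _)
  have hcop : Nat.Coprime x y := Nat.coprime_div_gcd_div_gcd hdpos
  have hx1 : 1 < x := by
    rcases Nat.lt_or_ge x 2 with h | h
    · interval_cases x
      · simp [hv1] at h1
      · exact absurd (by rw [hv1, mul_one]; exact Nat.gcd_dvd_right v1 v2) hnd1
    · exact h
  have hy1 : 1 < y := by
    rcases Nat.lt_or_ge y 2 with h | h
    · interval_cases y
      · simp [hv2] at h2
      · exact absurd (by rw [hv2, mul_one]; exact Nat.gcd_dvd_left v1 v2) hnd2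
    · exact h
  have hxy : x ≠ y := by
    intro h
    have := hcop
    rw [h, Nat.Coprime, Nat.gcd_self] at this
    omega
  have hlt : x + y < x * y := by
    rcases Nat.lt_or_ge x y with h | h
    · nlinarith
    · have h' : y < x := lt_of_le_of_ne h (Ne.symm hxy)
      nlinarith
  have hlcm : Nat.lcm v1 v2 = d * (x * y) := by
    rw [hv1, hv2, Nat.lcm_mul_left, hcop.lcm_eq_mul]
  have hT : Nat.lcm v1 v2 - (v1 + v2) = d * (x * y - x - y) := by
    rw [hlcm, hv1, hv2, Nat.mul_sub, Nat.mul_sub]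
    omega
  have hFrob := frobeniusNumber_pair hcop hx1 hy1
  rw [FrobeniusNumber, IsGreatest] at hFrob
  obtain ⟨hmem, hub⟩ := hFrob
  rw [Set.mem_setOf_eq, AddSubmonoid.mem_closure_pair] at hmem
  refine ⟨?_, ?_, ?_, ?_⟩
  · rw [hT]
    have : 0 < x * y - x - y := by omega
    positivity
  · rw [hT]; exact Dvd.intro _ rfl
  · rintro ⟨a, b, hab⟩
    rw [hT, hv1, hv2] at hab
    apply hmem
    refine ⟨a, b, ?_⟩
    simp only [smul_eq_mul]
    have : d * (a * x + b * y) = d * (x * y - x - y) := by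
      rw [← hab]; ring
    exact Nat.eq_of_mul_eq_mul_left hdpos this
  · intro k hk hkT
    obtain ⟨k', rfl⟩ := hk
    rw [hT] at hkT
    have hk' : x * y - x - y < k' := lt_of_mul_lt_mul_left hkT (Nat.zero_le d)
    have hmem' : k' ∈ AddSubmonoid.closure ({x, y} : Set ℕ) := by
      by_contra hc
      exact absurd (hub hc) (not_le.mpr hk')
    rw [AddSubmonoid.mem_closure_pair] at hmem'
    obtain ⟨a, b, hab⟩ := hmem'
    simp only [smul_eq_mul] at hab
    exact ⟨a, b, by rw [hv1, hv2, ← hab]; ring⟩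
end

section
/- Let n ≥ 1 and a1,...,an ≥ 2 be integers (a1 ≥ 1 allowed). Define rationals w1 = 1/(a1+1) and w_{i+1} = (1 − w_i)/a_{i+1} for 1 ≤ i ≤ n−1. Then the product ∏_{i=1}^n (1/w_i − 1) equals ρ(a_n, a_{n−1}, ..., a_2, a_1+1), where ρ(x1,...,xk) = x1···xk − x2···xk + ... + (−1)^{k−1}x_k + (−1)^k. -/
/-- The alternating function ρ: ρ() = 1, ρ(x₁,...,x_k) = x₁·x₂···x_k − ρ(x₂,...,x_k). -/
def rho : List ℤ → ℤ
  | [] => 1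
  | x :: xs => x * xs.prod - rho xs

/-!
Put `b₁ = a₁ + 1` and `bᵢ = aᵢ` for `i ≥ 2`, so that the weights satisfy `w₁ b₁ = 1` and
`wᵢ₊₁ bᵢ₊₁ = 1 - wᵢ`. Both sides of the identity then equal `(1 - w_k) · b₁ ⋯ b_k`: the product
telescopes because `1/wᵢ₊₁ - 1 = (1 - wᵢ₊₁) bᵢ₊₁ / (1 - wᵢ)`, and the recursion defining `ρ`
reproduces the recursion of the weights.
-/

open Finset

theorem List.map_range_succ_sub {α : Type*} (b : ℕ → α) (k : ℕ) :
    (List.range (k + 1)).map (fun j => b (k + 1 - j)) =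
      b (k + 1) :: (List.range k).map (fun j => b (k - j)) := by
  simp [List.range_succ_eq_map, Function.comp_def]

theorem List.prod_map_range_sub {M : Type*} [CommMonoid M] (b : ℕ → M) (k : ℕ) :
    ((List.range k).map (fun j => b (k - j))).prod = ∏ i ∈ Icc 1 k, b i := by
  induction k with
  | zero => simp
  | succ k ih =>
    rw [List.map_range_succ_sub, List.prod_cons, ih, prod_Icc_succ_top (by omega), mul_comm]

namespace ChainWeight

theorem pos_and_lt_one {K : Type*} [Field K] [LinearOrder K] [IsStrictOrderedRing K]
    {w b : ℕ → K} {k : ℕ} (hb₁ : 1 < b 1) (hb : ∀ i, 2 ≤ i → i ≤ k → 1 ≤ b i)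
    (hw₁ : w 1 * b 1 = 1) (hw : ∀ i, 1 ≤ i → i < k → w (i + 1) * b (i + 1) = 1 - w i) :
    ∀ i ∈ Icc 1 k, 0 < w i ∧ w i < 1 := by
  intro i hi
  rw [mem_Icc] at hi
  obtain ⟨hi, hik⟩ := hi
  induction i, hi using Nat.le_induction with
  | base => constructor <;> nlinarith
  | succ i hi ih =>
    obtain ⟨h₀, h₁⟩ := ih (by omega)
    have hbi := hb (i + 1) (by omega) hik
    have hwi := hw i hi (by omega)
    constructor <;> nlinarith

variable {K : Type*} [Field K] {w : ℕ → K} {k : ℕ}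

theorem rho_map_range_sub (b : ℕ → ℤ) (hk : 1 ≤ k) (hw₁ : w 1 * b 1 = 1)
    (hw : ∀ i, 1 ≤ i → i < k → w (i + 1) * b (i + 1) = 1 - w i) :
    (rho ((List.range k).map (fun j => b (k - j))) : K) =
      (1 - w k) * ∏ i ∈ Icc 1 k, (b i : K) := by
  induction k, hk using Nat.le_induction with
  | base => simp [rho, sub_mul, hw₁]
  | succ k hk ih =>
    have hk' := hw k hk (by omega)
    rw [List.map_range_succ_sub, rho, Int.cast_sub, Int.cast_mul, List.prod_map_range_sub,
      Int.cast_prod, ih fun i hi hik => hw i hi (by omega), prod_Icc_succ_top (by omega)]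
    linear_combination (∏ i ∈ Icc 1 k, (b i : K)) * hk'

theorem prod_inv_sub_one_eq (b : ℕ → K) (hk : 1 ≤ k) (hw₀ : ∀ i ∈ Icc 1 k, w i ≠ 0)
    (hw₁ : w 1 * b 1 = 1) (hw : ∀ i, 1 ≤ i → i < k → w (i + 1) * b (i + 1) = 1 - w i) :
    ∏ i ∈ Icc 1 k, (1 / w i - 1) = (1 - w k) * ∏ i ∈ Icc 1 k, b i := by
  induction k, hk using Nat.le_induction with
  | base =>
    have h₁ : w 1 ≠ 0 := left_ne_zero_of_mul_eq_one hw₁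
    rw [Icc_self, prod_singleton, prod_singleton, eq_one_div_of_mul_eq_one_right hw₁]
    field_simp
  | succ k hk ih =>
    have hk' := hw k hk (by omega)
    have h₀ : w (k + 1) ≠ 0 := hw₀ (k + 1) (right_mem_Icc.2 (by omega))
    rw [prod_Icc_succ_top (by omega), prod_Icc_succ_top (by omega),
      ih (fun i hi => hw₀ i (Icc_subset_Icc_right k.le_succ hi)) fun i hi hik => hw i hi (by omega),
      ← hk']
    field_simp

theorem prod_inv_sub_one_eq_rho (b : ℕ → ℤ) (hw₀ : ∀ i ∈ Icc 1 k, w i ≠ 0)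
    (hw₁ : w 1 * b 1 = 1) (hw : ∀ i, 1 ≤ i → i < k → w (i + 1) * b (i + 1) = 1 - w i) :
    ∏ i ∈ Icc 1 k, (1 / w i - 1) = (rho ((List.range k).map (fun j => b (k - j))) : K) := by
  rcases Nat.eq_zero_or_pos k with rfl | hk
  · simp [rho]
  · rw [prod_inv_sub_one_eq (fun i => (b i : K)) hk hw₀ hw₁ hw, rho_map_range_sub b hk hw₁ hw]

end ChainWeight

theorem stmt5_general (n : ℕ) (a : ℕ → ℤ) (w : ℕ → ℚ)
    (ha1 : 1 ≤ a 1) (ha : ∀ i, 2 ≤ i → i ≤ n → 2 ≤ a i)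
    (hw1 : w 1 = 1 / ((a 1 : ℚ) + 1))
    (hw : ∀ i, 1 ≤ i → i ≤ n - 1 → w (i + 1) = (1 - w i) / (a (i + 1) : ℚ)) :
    ∏ i ∈ Finset.Icc 1 n, (1 / w i - 1) =
      ((rho ((List.range n).map
        (fun j => if j = n - 1 then a 1 + 1 else a (n - j))) : ℤ) : ℚ) := by
  set b : ℕ → ℤ := fun i => if i = 1 then a 1 + 1 else a i
  have hb : ∀ i, 2 ≤ i → b i = a i := fun i hi => if_neg (by omega)
  have hlist : (List.range n).map (fun j => if j = n - 1 then a 1 + 1 else a (n - j)) =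
      (List.range n).map (fun j => b (n - j)) :=
    List.map_congr_left fun j hj => by grind
  have hb₁ : (1 : ℚ) < a 1 + 1 := by exact_mod_cast (by omega : 1 < a 1 + 1)
  have hw₁ : w 1 * b 1 = 1 := by
    rw [hw1, show ((b 1 : ℤ) : ℚ) = a 1 + 1 by simp [b]]
    field_simp
  have hwb : ∀ i, 1 ≤ i → i < n → w (i + 1) * b (i + 1) = 1 - w i := by
    intro i hi hin
    have ha' : (2 : ℚ) ≤ a (i + 1) := by exact_mod_cast ha (i + 1) (by omega) (by omega)
    rw [hb (i + 1) (by omega), hw i hi (by omega)]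
    field_simp
  have hb₂ : ∀ i, 2 ≤ i → i ≤ n → (1 : ℚ) ≤ b i := fun i hi hin => by
    rw [hb i hi]
    exact_mod_cast (ha i hi hin).trans' (by norm_num)
  have hw₀ : ∀ i ∈ Icc 1 n, w i ≠ 0 := fun i hi =>
    (ChainWeight.pos_and_lt_one (by simpa [b]) hb₂ hw₁ hwb i hi).1.ne'
  rw [hlist, ChainWeight.prod_inv_sub_one_eq_rho b hw₀ hw₁ hwb]

theorem stmt5 (n : ℕ) (hn : 1 ≤ n) (a : ℕ → ℤ) (w : ℕ → ℚ)
    (ha1 : 1 ≤ a 1) (ha : ∀ i, 2 ≤ i → i ≤ n → 2 ≤ a i)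
    (hw1 : w 1 = 1 / ((a 1 : ℚ) + 1))
    (hw : ∀ i, 1 ≤ i → i ≤ n - 1 → w (i + 1) = (1 - w i) / (a (i + 1) : ℚ)) :
    ∏ i ∈ Finset.Icc 1 n, (1 / w i - 1) =
      ((rho ((List.range n).map
        (fun j => if j = n - 1 then a 1 + 1 else a (n - j))) : ℤ) : ℚ) :=
  stmt5_general n a w ha1 ha hw1 hw
end

section
/- Let m ≥ 1 and a1,...,am ≥ 1 be integers with a1···am − (−1)^m ≠ 0. The unique rational solution (w1,...,wm) of the system a_i·w_i + w_{i+1} = 1 (indices mod m, so a_m·w_m + w_1 = 1) is given by w_i = ρ(a_{i+1}, a_{i+2}, ..., a_m, a_1, ..., a_{i−1}) / (a_1···a_m − (−1)^m), where ρ(x1,...,xk) = x1···xk − x2···xk + ... + (−1)^k. -/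
open Finset

lemma rho_append_singleton (xs : List ℤ) (y : ℤ) :
    rho (xs ++ [y]) = y * rho xs - (-1) ^ xs.length := by
  induction xs with
  | nil => simp [rho]
  | cons x xs ih =>
    simp only [List.cons_append, rho, ih, List.prod_append, List.length_cons, pow_succ,
      List.prod_cons, List.prod_nil, mul_one]
    ring

lemma mul_rho_cons_add_rho_append_singleton (x y : ℤ) (xs : List ℤ) :
    x * rho (y :: xs) + rho (xs ++ [x]) = x * y * xs.prod - (-1) ^ xs.length := by
  rw [rho, rho_append_singleton]
  ring

lemma prod_range_add_mod {M : Type*} [CommMonoid M] (a : ℕ → M) {m i : ℕ} (hi : i < m) :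
    ∏ j ∈ range m, a ((i + j) % m) = ∏ j ∈ range m, a j := by
  have : NeZero m := ⟨by omega⟩
  simp only [← Fin.prod_univ_eq_prod_range]
  simpa [Fin.val_add] using Equiv.prod_comp (Equiv.addLeft (⟨i, hi⟩ : Fin m)) (fun j => a j)

def cyclicTail (a : ℕ → ℤ) (m i : ℕ) : List ℤ :=
  (List.range (m - 1)).map (fun j => a ((i + 1 + j) % m))

section CyclicTail

variable (a : ℕ → ℤ) (k : ℕ)

lemma cyclicTail_eq_cons (i : ℕ) :
    cyclicTail a (k + 2) i =
      a ((i + 1) % (k + 2)) :: (List.range k).map (fun j => a ((i + 2 + j) % (k + 2))) := by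
  rw [cyclicTail, show k + 2 - 1 = k + 1 from rfl, List.range_succ_eq_map, List.map_cons,
    List.map_map]
  congr 2
  funext j
  simp only [Function.comp, Nat.succ_eq_add_one]
  ring_nf

lemma cyclicTail_mod_succ_eq_append {i : ℕ} (hi : i < k + 2) :
    cyclicTail a (k + 2) ((i + 1) % (k + 2)) =
      (List.range k).map (fun j => a ((i + 2 + j) % (k + 2))) ++ [a i] := by
  have hshift (j : ℕ) : ((i + 1) % (k + 2) + 1 + j) % (k + 2) = (i + 2 + j) % (k + 2) := by
    rw [Nat.add_assoc, Nat.mod_add_mod]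
    ring_nf
  rw [cyclicTail, show k + 2 - 1 = k + 1 from rfl, List.range_succ, List.map_append,
    List.map_singleton, hshift, show i + 2 + k = i + (k + 2) by ring, Nat.add_mod_right,
    Nat.mod_eq_of_lt hi]
  congr 2
  funext j
  exact congrArg a (hshift j)

lemma prod_range_add_two_eq_mul_mul_prod {i : ℕ} (hi : i < k + 2) :
    ∏ j ∈ range (k + 2), a j =
      a i * a ((i + 1) % (k + 2)) * ∏ j ∈ range k, a ((i + 2 + j) % (k + 2)) := by
  rw [← prod_range_add_mod a hi, prod_range_succ', prod_range_succ', add_zero, zero_add,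
    Nat.mod_eq_of_lt hi, mul_rotate, mul_comm (a _)]
  exact congrArg _ (prod_congr rfl fun j _ => by ring_nf)

end CyclicTail

theorem mul_rho_cyclicTail_add_rho_cyclicTail_mod_succ (a : ℕ → ℤ) {m i : ℕ} (hi : i < m) :
    a i * rho (cyclicTail a m i) + rho (cyclicTail a m ((i + 1) % m)) =
      (∏ j ∈ range m, a j) - (-1) ^ m := by
  obtain _ | _ | k := m
  · omega
  · obtain rfl : i = 0 := by omega
    simp [cyclicTail, rho]
  · rw [cyclicTail_eq_cons, cyclicTail_mod_succ_eq_append a k hi,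
      mul_rho_cons_add_rho_append_singleton, prod_range_add_two_eq_mul_mul_prod a k hi,
      List.length_map, List.length_range, show (-1 : ℤ) ^ (k + 1 + 1) = (-1) ^ k by ring]
    rfl

section CyclicSystem

variable {R : Type*} [CommRing R] {m : ℕ} {a : ℕ → R}

lemma apply_mod_eq_prod_neg_mul_of_mul_add_eq_zero {v : ℕ → R}
    (hv : ∀ i < m, a i * v i + v ((i + 1) % m) = 0) :
    ∀ t ≤ m, v (t % m) = (∏ j ∈ range t, -a j) * v 0 := by
  intro t
  induction t with
  | zero => simp
  | succ t ih =>
    intro ht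
    rw [prod_range_succ, mul_right_comm, ← ih (Nat.le_of_succ_le ht), Nat.mod_eq_of_lt ht]
    linear_combination hv t ht

lemma eq_zero_of_mul_add_eq_zero [NoZeroDivisors R] (hD : ∏ i ∈ range m, a i - (-1) ^ m ≠ 0)
    {v : ℕ → R} (hv : ∀ i < m, a i * v i + v ((i + 1) % m) = 0) :
    ∀ i < m, v i = 0 := by
  have hcycle := apply_mod_eq_prod_neg_mul_of_mul_add_eq_zero hv m le_rfl
  rw [Nat.mod_self, prod_neg, card_range] at hcycle
  have hv0 : (∏ i ∈ range m, a i - (-1) ^ m) * v 0 = 0 := by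
    have hsq : ((-1 : R) ^ m) ^ 2 = 1 := by
      rw [← pow_mul, mul_comm, pow_mul, neg_one_sq, one_pow]
    linear_combination (-(-1) ^ m) * hcycle - (∏ i ∈ range m, a i) * v 0 * hsq
  intro i hi
  simpa [Nat.mod_eq_of_lt hi, (mul_eq_zero.mp hv0).resolve_left hD] using
    apply_mod_eq_prod_neg_mul_of_mul_add_eq_zero hv i hi.le

theorem eq_of_mul_add_eq [NoZeroDivisors R] (hD : ∏ i ∈ range m, a i - (-1) ^ m ≠ 0)
    {b v w : ℕ → R}
    (hv : ∀ i < m, a i * v i + v ((i + 1) % m) = b i)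
    (hw : ∀ i < m, a i * w i + w ((i + 1) % m) = b i) :
    ∀ i < m, v i = w i := fun i hi =>
  sub_eq_zero.mp <| eq_zero_of_mul_add_eq_zero hD (v := fun i => v i - w i)
    (fun i hi => by linear_combination hv i hi - hw i hi) i hi

end CyclicSystem

theorem stmt7_general (m : ℕ) (a : ℕ → ℤ)
    (hD : (∏ i ∈ Finset.range m, a i) - (-1 : ℤ) ^ m ≠ 0)
    (w : ℕ → ℚ)
    (hw : ∀ i < m, (a i : ℚ) * w i + w ((i + 1) % m) = 1) :
    ∀ i < m, w i =
      ((rho ((List.range (m - 1)).map (fun j => a ((i + 1 + j) % m))) : ℤ) : ℚ) /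
        (((∏ i ∈ Finset.range m, a i) - (-1 : ℤ) ^ m : ℤ) : ℚ) := by
  have hDQ : (((∏ i ∈ range m, a i) - (-1) ^ m : ℤ) : ℚ) ≠ 0 := by exact_mod_cast hD
  refine eq_of_mul_add_eq (a := fun i => (a i : ℚ)) (by exact_mod_cast hD) hw fun i hi => ?_
  rw [← mul_div_assoc, ← add_div, div_eq_one_iff_eq hDQ]
  exact_mod_cast mul_rho_cyclicTail_add_rho_cyclicTail_mod_succ a hi

theorem stmt7 (m : ℕ) (hm : 1 ≤ m) (a : ℕ → ℤ) (ha : ∀ i, 1 ≤ a i)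
    (hD : (∏ i ∈ Finset.range m, a i) - (-1 : ℤ) ^ m ≠ 0)
    (w : ℕ → ℚ)
    (hw : ∀ i < m, (a i : ℚ) * w i + w ((i + 1) % m) = 1) :
    ∀ i < m, w i =
      ((rho ((List.range (m - 1)).map (fun j => a ((i + 1 + j) % m))) : ℤ) : ℚ) /
        (((∏ i ∈ Finset.range m, a i) - (-1 : ℤ) ^ m : ℤ) : ℚ) :=
  stmt7_general m a hD w hw
end

section
/- Let m ≥ 1 and a1,...,am ≥ 1 with a1···am − (−1)^m ≠ 0, and let w_i = ρ(a_{i+1},...,a_m,a_1,...,a_{i−1})/(a_1···a_m − (−1)^m) be the cycle weights. Then ∏_{i=1}^m (1/w_i − 1) = a_1·a_2···a_m. -/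
/-!
Write `D = a₁⋯aₘ - (-1)^m` and `r_i = ρ(a_{i+1}, …, a_{i-1})`, so `w_i = r_i / D`. Expanding
`ρ(a_{i+1}, …, a_{i+m})` once from the front and once from the back gives `D - r_{i+1} = a_i r_i`.
Hence `1/w_{i+1} - 1 = a_i r_i / r_{i+1}`, and the product over a full cycle telescopes to `a₁⋯aₘ`.
-/

open Finset

theorem Function.Periodic.prod_range_add {M : Type*} [CommMonoid M] {f : ℕ → M} {m : ℕ}
    (hf : Function.Periodic f m) (i : ℕ) :
    ∏ j ∈ range m, f (i + j) = ∏ j ∈ range m, f j := by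
  induction i with
  | zero => simp only [zero_add]
  | succ i ih =>
    rw [← ih]
    rcases m with _ | n
    · simp only [range_zero, prod_empty]
    · rw [prod_range_succ, prod_range_succ', add_zero,
        show i + 1 + n = i + ↑(n + 1) by ring, hf]
      simp only [add_assoc, add_comm 1]

theorem prod_range_mul_div_succ_of_periodic {K : Type*} [Field K] {g : ℕ → K} {m : ℕ}
    (hg : Function.Periodic g m) (hg0 : ∀ i < m, g i ≠ 0) (c : ℕ → K) :
    ∏ i ∈ range m, c i * g i / g (i + 1) = ∏ i ∈ range m, c i := by
  have hshift : ∏ i ∈ range m, g (i + 1) = ∏ i ∈ range m, g i := by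
    simpa only [Function.comp_apply, add_comm 1] using hg.prod_range_add 1
  have hprod : ∏ i ∈ range m, g i ≠ 0 := prod_ne_zero_iff.mpr fun i hi => hg0 i (mem_range.mp hi)
  rw [prod_div_distrib, prod_mul_distrib, hshift, mul_div_assoc, div_self hprod, mul_one]

theorem rho_append (xs : List ℤ) (y : ℤ) :
    rho (xs ++ [y]) = y * rho xs + (-1) ^ (xs.length + 1) := by
  induction xs with
  | nil => simp only [List.nil_append, rho, List.prod_nil, List.length_nil]; ring
  | cons x xs ih =>
    simp only [List.cons_append, rho, ih, List.prod_append, List.prod_cons, List.prod_nil,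
      List.length_cons]
    ring

section CyclicBlock

variable (m : ℕ) (a : ℕ → ℤ)

def cyclicBlock (i n : ℕ) : List ℤ :=
  (List.range n).map fun j => a ((i + j) % m)

theorem length_cyclicBlock (i n : ℕ) : (cyclicBlock m a i n).length = n := by
  simp only [cyclicBlock, List.length_map, List.length_range]

theorem cyclicBlock_succ_eq_append (i n : ℕ) :
    cyclicBlock m a i (n + 1) = cyclicBlock m a i n ++ [a ((i + n) % m)] := by
  simp only [cyclicBlock, List.range_succ, List.map_append, List.map_cons, List.map_nil]

theorem cyclicBlock_succ_eq_cons (i n : ℕ) :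
    cyclicBlock m a i (n + 1) = a (i % m) :: cyclicBlock m a (i + 1) n := by
  simp only [cyclicBlock, List.range_succ_eq_map, List.map_cons, List.map_map, add_zero]
  congr 2
  ext j
  simp only [Function.comp_apply, Nat.succ_eq_add_one, add_assoc, add_comm 1]

theorem cyclicBlock_add_period (i n : ℕ) :
    cyclicBlock m a (i + m) n = cyclicBlock m a i n := by
  simp only [cyclicBlock, add_right_comm i m, Nat.add_mod_right]

theorem prod_cyclicBlock (i : ℕ) :
    (cyclicBlock m a i m).prod = ∏ j ∈ range m, a j := by
  have hper : Function.Periodic (fun j => a (j % m)) m := fun j => by simp only [Nat.add_mod_right]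
  calc (cyclicBlock m a i m).prod = ∏ j ∈ range m, a ((i + j) % m) := rfl
    _ = ∏ j ∈ range m, a (j % m) := hper.prod_range_add i
    _ = ∏ j ∈ range m, a j := prod_congr rfl fun j hj => by rw [Nat.mod_eq_of_lt (mem_range.mp hj)]

/-- `ρ(a_{i+1}, …, a_{i+m-1})`, indices mod `m`: the numerator of the cycle weight `w_i`. -/
def cycleRho (i : ℕ) : ℤ :=
  rho (cyclicBlock m a (i + 1) (m - 1))

theorem cycleRho_periodic : Function.Periodic (cycleRho m a) m := fun i => by
  simp only [cycleRho, add_right_comm i m, cyclicBlock_add_period]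

/-- Both sides are computed from `ρ(a_{i+1}, …, a_{i+m})`, peeling off its first resp. last entry. -/
theorem prod_sub_neg_one_pow_sub_cycleRho_succ (hm : 0 < m) (i : ℕ) :
    (∏ j ∈ range m, a j) - (-1) ^ m - cycleRho m a (i + 1) = a (i % m) * cycleRho m a i := by
  obtain ⟨n, rfl⟩ := Nat.exists_eq_add_one.mpr hm
  have hfirst := congrArg rho (cyclicBlock_succ_eq_cons (n + 1) a (i + 1) n)
  have hlast := congrArg rho (cyclicBlock_succ_eq_append (n + 1) a (i + 1) n)
  rw [show i + 1 + n = i + (n + 1) by ring, Nat.add_mod_right, rho_append,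
    length_cyclicBlock] at hlast
  have hprod := prod_cyclicBlock (n + 1) a (i + 1)
  rw [cyclicBlock_succ_eq_cons, List.prod_cons] at hprod
  simp only [rho, Nat.add_sub_cancel, cycleRho] at hfirst ⊢
  rw [← hprod]
  linarith

end CyclicBlock

theorem stmt8_general (m : ℕ) (a : ℕ → ℤ)
    (w : ℕ → ℚ)
    (hw : ∀ i < m, w i =
      ((rho ((List.range (m - 1)).map (fun j => a ((i + 1 + j) % m))) : ℤ) : ℚ) /
        (((∏ i ∈ Finset.range m, a i) - (-1 : ℤ) ^ m : ℤ) : ℚ))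
    (hwpos : ∀ i < m, 0 < w i) :
    ∏ i ∈ Finset.range m, (1 / w i - 1) = ((∏ i ∈ Finset.range m, a i : ℤ) : ℚ) := by
  set D : ℚ := (((∏ i ∈ range m, a i) - (-1 : ℤ) ^ m : ℤ) : ℚ)
  set r : ℕ → ℚ := fun i => (cycleRho m a i : ℚ)
  have hr : Function.Periodic r m := (cycleRho_periodic m a).comp _
  have hw' : ∀ i < m, w i = r i / D := hw
  have hr0 : ∀ i < m, r i ≠ 0 := fun i hi h => (hwpos i hi).ne' (by rw [hw' i hi, h, zero_div])
  have hkey : ∀ i < m, D - r (i + 1) = a i * r i := fun i hi => by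
    have := prod_sub_neg_one_pow_sub_cycleRho_succ m a (by omega) i
    rw [Nat.mod_eq_of_lt hi] at this
    simp only [D, r]
    exact_mod_cast this
  calc ∏ i ∈ range m, (1 / w i - 1) = ∏ i ∈ range m, (D - r i) / r i :=
        prod_congr rfl fun i hi => by
          rw [hw' i (mem_range.mp hi), one_div_div, div_sub_one (hr0 i (mem_range.mp hi))]
    _ = ∏ i ∈ range m, (D - r (i + 1)) / r (i + 1) := by
        simpa only [Function.comp_apply, add_comm 1] using
          ((hr.comp fun x => (D - x) / x).prod_range_add 1).symm
    _ = ∏ i ∈ range m, a i * r i / r (i + 1) :=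
        prod_congr rfl fun i hi => by rw [hkey i (mem_range.mp hi)]
    _ = ((∏ i ∈ range m, a i : ℤ) : ℚ) := by
        rw [prod_range_mul_div_succ_of_periodic hr hr0, Int.cast_prod]

theorem stmt8 (m : ℕ) (hm : 1 ≤ m) (a : ℕ → ℤ) (ha : ∀ i, 1 ≤ a i)
    (hD : (∏ i ∈ Finset.range m, a i) - (-1 : ℤ) ^ m ≠ 0)
    (w : ℕ → ℚ)
    (hw : ∀ i < m, w i =
      ((rho ((List.range (m - 1)).map (fun j => a ((i + 1 + j) % m))) : ℤ) : ℚ) /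
        (((∏ i ∈ Finset.range m, a i) - (-1 : ℤ) ^ m : ℤ) : ℚ))
    (hwpos : ∀ i < m, 0 < w i) :
    ∏ i ∈ Finset.range m, (1 / w i - 1) = ((∏ i ∈ Finset.range m, a i : ℤ) : ℚ) :=
  stmt8_general m a w hw hwpos
end

section
/- For n ∈ ℕ, let l1(n) be the maximum of lcm(b1,...,bn)/((b1−1)···(bn−1)) over all integers b1,...,bn ≥ 2. Then l1(n) = ∏_{i=1}^n p_i/(p_i − 1), where p_i is the i-th prime number. -/
/-!
Write `L = lcm b` and give each prime `p ∣ L` to an index `i` at which `b i` attains the full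
exponent of `p` in `L`. Collecting the assigned prime powers gives pairwise coprime `c i ∣ b i`
with `∏ c i = L`, so the ratio is `∏ c i / (b i - 1)`. A factor with `c i = 1` is at most `1`;
otherwise it is at most `c i / (c i - 1) ≤ q / (q - 1)` for the least prime `q` of `c i`, since
`x ↦ x / (x - 1)` decreases. These primes are distinct, and a product of `x / (x - 1)` over at
most `n` distinct primes is largest for the first `n` primes, which also realise it as the `b i`.
-/

open Finset

theorem Antitone.prod_le_prod_range_card {R : Type*} [CommSemiring R] [PartialOrder R]
    [IsOrderedRing R] {g : ℕ → R} (hg : Antitone g) (h0 : ∀ i, 0 ≤ g i) (s : Finset ℕ) :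
    ∏ i ∈ s, g i ≤ ∏ i ∈ range #s, g i := by
  induction s using Finset.induction_on_max with
  | empty => simp
  | insert a s ha ih =>
    have has : a ∉ s := fun h => (ha a h).false
    have hcard : #s ≤ a := by simpa using card_le_card fun x hx => mem_range.2 (ha x hx)
    rw [prod_insert has, card_insert_of_notMem has, prod_range_succ, mul_comm]
    exact mul_le_mul ih (hg hcard) (h0 a) (prod_nonneg fun i _ => h0 i)

theorem Nat.exists_pairwise_coprime_dvd_prod_eq_lcm {ι : Type*} [Fintype ι] (b : ι → ℕ)
    (hb : ∀ i, b i ≠ 0) :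
    ∃ c : ι → ℕ, (∀ i, c i ∣ b i) ∧ (Pairwise fun i j => Nat.Coprime (c i) (c j)) ∧
      ∏ i, c i = univ.lcm b := by
  classical
  rcases isEmpty_or_nonempty ι with hι | hι
  · exact ⟨fun _ => 1, by simp, fun i => isEmptyElim i, by simp⟩
  set L := univ.lcm b
  have hL : L ≠ 0 := by simpa [L, Finset.lcm_eq_zero_iff] using hb
  have hmax : ∀ p, ∃ i, L.factorization p = (b i).factorization p := fun p => by
    obtain ⟨i, -, hi⟩ := exists_mem_eq_sup univ univ_nonempty fun i => (b i).factorization p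
    exact ⟨i, by rw [Finset.factorization_lcm fun i _ => hb i, hi]⟩
  choose g hg using hmax
  set F : ι → ℕ →₀ ℕ := fun i => L.factorization.filter (g · = i)
  have hF : ∀ i, ((F i).prod (· ^ ·)).factorization = F i := fun i =>
    Nat.prod_pow_factorization_eq_self fun p hp => by
      simp only [F, Finsupp.support_filter, mem_filter, Nat.support_factorization] at hp
      exact Nat.prime_of_mem_primeFactors hp.1
  have hdvd : ∀ i, (F i).prod (· ^ ·) ∣ b i := fun i => by
    refine Nat.prod_pow_dvd_of_le_factorization fun p => ?_
    by_cases hp : g p = i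
    · simp [F, hg, hp]
    · simp [F, hp]
  refine ⟨fun i => (F i).prod (· ^ ·), hdvd, fun i j hij => ?_, ?_⟩
  · change Nat.Coprime _ _
    rw [← Nat.disjoint_primeFactors (ne_zero_of_dvd_ne_zero (hb i) (hdvd i))
      (ne_zero_of_dvd_ne_zero (hb j) (hdvd j)), ← Nat.support_factorization,
      ← Nat.support_factorization, hF, hF, Finsupp.support_filter, Finsupp.support_filter]
    exact disjoint_filter.2 fun p _ hi hj => hij (hi ▸ hj)
  · simp only [F, Finsupp.prod_filter_index, Finsupp.support_filter, Nat.support_factorization]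
    convert prod_fiberwise L.primeFactors g fun p => p ^ L.factorization p
    exact (Nat.prod_factorization_pow_eq_self hL).symm

section
variable {K : Type*} [Field K] [LinearOrder K] [IsStrictOrderedRing K]

theorem one_le_div_sub_one {x : K} (hx : 1 < x) : 1 ≤ x / (x - 1) := by
  rw [le_div_iff₀ (by linarith)]; linarith

theorem div_sub_one_le_div_sub_one {x y : K} (hx : 1 < x) (hxy : x ≤ y) :
    y / (y - 1) ≤ x / (x - 1) := by
  rw [div_le_div_iff₀ (by linarith) (by linarith)]; linarith

theorem prod_primes_div_sub_one_le (s : Finset ℕ) (hs : ∀ p ∈ s, p.Prime) {n : ℕ} (hn : #s ≤ n) :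
    ∏ p ∈ s, (p : K) / (p - 1) ≤
      ∏ i ∈ range n, (Nat.nth Nat.Prime i : K) / (Nat.nth Nat.Prime i - 1) := by
  set g : ℕ → K := fun i => (Nat.nth Nat.Prime i : K) / (Nat.nth Nat.Prime i - 1)
  have one_lt_nth (i : ℕ) : (1 : K) < Nat.nth Nat.Prime i := by
    exact_mod_cast (Nat.prime_nth_prime i).one_lt
  have hg : Antitone g := fun i j hij => div_sub_one_le_div_sub_one (one_lt_nth i)
    (by exact_mod_cast Nat.nth_monotone Nat.infinite_setOfPred_prime hij)
  have hg1 (i : ℕ) : 1 ≤ g i := one_le_div_sub_one (one_lt_nth i)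
  have hcount : Set.InjOn (Nat.count Nat.Prime) s := fun p hp q hq =>
    Nat.count_injective (hs p hp) (hs q hq)
  calc ∏ p ∈ s, (p : K) / (p - 1) = ∏ i ∈ s.image (Nat.count Nat.Prime), g i := by
        rw [prod_image hcount]
        exact prod_congr rfl fun p hp => by simp only [g, Nat.nth_count (hs p hp)]
    _ ≤ ∏ i ∈ range #(s.image (Nat.count Nat.Prime)), g i :=
        hg.prod_le_prod_range_card (fun i => zero_le_one.trans (hg1 i)) _
    _ ≤ ∏ i ∈ range n, g i :=
        prod_le_prod_of_subset_of_one_le (range_subset_range.2 (card_image_le.trans hn))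
          (fun i _ => zero_le_one.trans (hg1 i)) fun i _ _ => hg1 i

theorem natCast_div_sub_one_le_of_dvd {c b : ℕ} (hcb : c ∣ b) (hb : 2 ≤ b) :
    (c : K) / (b - 1) ≤ if c = 1 then 1 else (c.minFac : K) / (c.minFac - 1) := by
  have hb' : (2 : K) ≤ b := by exact_mod_cast hb
  split_ifs with hc
  · rw [hc, Nat.cast_one, div_le_one (by linarith)]
    linarith
  · have hc2 : 2 ≤ c := by
      have := Nat.pos_of_dvd_of_pos hcb (by omega)
      omega
    have hc' : (1 : K) < c := by exact_mod_cast hc2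
    calc (c : K) / (b - 1) ≤ c / (c - 1) :=
          div_le_div_of_nonneg_left (by linarith) (by linarith)
            (by linarith [show (c : K) ≤ b from mod_cast Nat.le_of_dvd (by omega) hcb])
      _ ≤ (c.minFac : K) / (c.minFac - 1) := div_sub_one_le_div_sub_one
          (mod_cast (Nat.minFac_prime hc).one_lt) (mod_cast Nat.minFac_le (by omega))

theorem lcm_div_prod_sub_one_le {ι : Type*} [Fintype ι] (b : ι → ℕ) (hb : ∀ i, 2 ≤ b i) :
    ((univ.lcm b : ℕ) : K) / ∏ i, ((b i : K) - 1) ≤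
      ∏ i ∈ range (Fintype.card ι), (Nat.nth Nat.Prime i : K) / (Nat.nth Nat.Prime i - 1) := by
  classical
  obtain ⟨c, hcb, hcop, hprod⟩ :=
    Nat.exists_pairwise_coprime_dvd_prod_eq_lcm b fun i => by have := hb i; omega
  set T := univ.filter (c · ≠ 1)
  have hinj : Set.InjOn (fun i => (c i).minFac) T := fun i hi j _ hij => by
    replace hij : (c i).minFac = (c j).minFac := hij
    by_contra hne
    refine (mem_filter.1 hi).2 (Nat.minFac_eq_one_iff.1 ?_)
    exact Nat.eq_one_of_dvd_coprimes (hcop hne) (Nat.minFac_dvd _) (hij ▸ Nat.minFac_dvd _)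
  calc ((univ.lcm b : ℕ) : K) / ∏ i, ((b i : K) - 1) = ∏ i, (c i : K) / (b i - 1) := by
        rw [← hprod, Nat.cast_prod, prod_div_distrib]
    _ ≤ ∏ i, if c i = 1 then 1 else ((c i).minFac : K) / ((c i).minFac - 1) :=
        prod_le_prod (fun i _ => div_nonneg (Nat.cast_nonneg _)
          (by linarith [show (2 : K) ≤ b i from mod_cast hb i]))
          fun i _ => natCast_div_sub_one_le_of_dvd (hcb i) (hb i)
    _ = ∏ p ∈ T.image fun i => (c i).minFac, (p : K) / (p - 1) := by
        rw [prod_image hinj, prod_filter]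
        simp only [ite_not]
    _ ≤ _ := prod_primes_div_sub_one_le _
        (by simp [T, Nat.minFac_prime_iff]) (card_image_le.trans (card_filter_le _ _))

end

theorem lcm_nth_prime_div_prod_sub_one {K : Type*} [Field K] (n : ℕ) :
    ((univ.lcm fun i : Fin n => Nat.nth Nat.Prime i : ℕ) : K) /
        ∏ i : Fin n, ((Nat.nth Nat.Prime i : K) - 1) =
      ∏ i ∈ range n, (Nat.nth Nat.Prime i : K) / (Nat.nth Nat.Prime i - 1) := by
  have hcop : ((univ : Finset (Fin n)) : Set (Fin n)).Pairwise fun i j =>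
      Nat.Coprime (Nat.nth Nat.Prime i) (Nat.nth Nat.Prime j) := fun i _ j _ hij =>
    (Nat.coprime_primes (Nat.prime_nth_prime i) (Nat.prime_nth_prime j)).2 fun h =>
      hij (Fin.ext (Nat.nth_injective Nat.infinite_setOfPred_prime h))
  rw [Finset.lcm_eq_prod hcop, Nat.cast_prod, ← prod_div_distrib,
    Fin.prod_univ_eq_prod_range fun i => (Nat.nth Nat.Prime i : K) / (Nat.nth Nat.Prime i - 1)]

theorem stmt9 (n : ℕ) :
    (∀ b : Fin n → ℕ, (∀ i, 2 ≤ b i) →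
      (((Finset.univ.lcm b : ℕ) : ℚ)) / ∏ i, ((b i : ℚ) - 1) ≤
        ∏ i ∈ Finset.range n, ((Nat.nth Nat.Prime i : ℚ) / ((Nat.nth Nat.Prime i : ℚ) - 1))) ∧
    (∃ b : Fin n → ℕ, (∀ i, 2 ≤ b i) ∧
      (((Finset.univ.lcm b : ℕ) : ℚ)) / ∏ i, ((b i : ℚ) - 1) =
        ∏ i ∈ Finset.range n, ((Nat.nth Nat.Prime i : ℚ) / ((Nat.nth Nat.Prime i : ℚ) - 1))) := by
  refine ⟨fun b hb => ?_, fun i => Nat.nth Nat.Prime i, fun i => (Nat.prime_nth_prime i).two_le,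
    lcm_nth_prime_div_prod_sub_one n⟩
  simpa only [Fintype.card_fin] using lcm_div_prod_sub_one_le (K := ℚ) b hb
end

section
/- Fix a weight system (v1,...,vn,d) with v_i < d and R ⊆ (ℕ₀ⁿ)_d, R_k as usual. Then condition (C3) implies condition (C2), where (C3): for all I, J ⊆ {1,...,n} with |I| < |J|, there exists k ∈ {1,...,n}∖I and α ∈ R_k supported in J; and (C2): for every nonempty J ⊆ {1,...,n} there exists K with |K| = |J| such that for all k ∈ K, R_k contains an element supported in J. -/
theorem Finset.exists_card_eq_of_forall_card_lt_exists_notMem {ι : Type*} [DecidableEq ι]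
    {p : ι → Prop} {m : ℕ} (h : ∀ I : Finset ι, I.card < m → ∃ k ∉ I, p k) :
    ∃ K : Finset ι, K.card = m ∧ ∀ k ∈ K, p k := by
  induction m with
  | zero => exact ⟨∅, by simp⟩
  | succ m ih =>
    obtain ⟨K, hK, hKp⟩ := ih fun I hI => h I (Nat.lt_succ_of_lt hI)
    obtain ⟨k, hkK, hk⟩ := h K (by omega)
    refine ⟨insert k K, by rw [card_insert_of_notMem hkK, hK], ?_⟩
    simpa only [forall_mem_insert] using ⟨hk, hKp⟩

theorem stmt13_general (n : ℕ)
    (Rk : Fin n → Set (Fin n → ℕ))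
    (hC3 : ∀ I J : Finset (Fin n), I.card < J.card →
      ∃ k ∉ I, ∃ α ∈ Rk k, ∀ i, i ∉ J → α i = 0) :
    ∀ J : Finset (Fin n), J.Nonempty →
      ∃ K : Finset (Fin n), K.card = J.card ∧
        ∀ k ∈ K, ∃ α ∈ Rk k, ∀ i, i ∉ J → α i = 0 :=
  fun J _ => Finset.exists_card_eq_of_forall_card_lt_exists_notMem fun I hI => hC3 I J hI

theorem stmt13 (n : ℕ) (v : Fin n → ℕ) (d : ℕ)
    (hv : ∀ i, 0 < v i) (hvd : ∀ i, v i < d)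
    (R : Set (Fin n → ℕ)) (hR : ∀ α ∈ R, ∑ i, α i * v i = d)
    (Rk : Fin n → Set (Fin n → ℕ))
    (hRk : ∀ (k : Fin n) (α : Fin n → ℕ), α ∈ Rk k ↔
      (∑ i, α i * v i = d - v k ∧ (fun i => α i + if i = k then 1 else 0) ∈ R))
    (hC3 : ∀ I J : Finset (Fin n), I.card < J.card →
      ∃ k ∉ I, ∃ α ∈ Rk k, ∀ i, i ∉ J → α i = 0) :
    ∀ J : Finset (Fin n), J.Nonempty →
      ∃ K : Finset (Fin n), K.card = J.card ∧
        ∀ k ∈ K, ∃ α ∈ Rk k, ∀ i, i ∉ J → α i = 0 :=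
  stmt13_general n Rk hC3
end

section
/- Fix a weight system (v1,...,vn,d) with v_i < d and R ⊆ (ℕ₀ⁿ)_d. Then condition (C1) implies condition (C3): (C1) states that for every nonempty J ⊆ N = {1,...,n}, either R has an element supported in J, or there is K ⊆ N∖J with |K| = |J| such that every k ∈ K has some α ∈ R_k supported in J; (C3) states that for all I, J ⊆ N with |I| < |J| there exist k ∈ N∖I and α ∈ R_k supported in J. -/
theorem stmt14 (n : ℕ) (v : Fin n → ℕ) (d : ℕ)
    (hv : ∀ i, 0 < v i) (hvd : ∀ i, v i < d)
    (R : Set (Fin n → ℕ)) (hR : ∀ α ∈ R, ∑ i, α i * v i = d)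
    (Rk : Fin n → Set (Fin n → ℕ))
    (hRk : ∀ (k : Fin n) (α : Fin n → ℕ), α ∈ Rk k ↔
      (∑ i, α i * v i = d - v k ∧ (fun i => α i + if i = k then 1 else 0) ∈ R))
    (hC1 : ∀ J : Finset (Fin n), J.Nonempty →
      (∃ α ∈ R, ∀ i, i ∉ J → α i = 0) ∨
      (∃ K : Finset (Fin n), K ⊆ Jᶜ ∧ K.card = J.card ∧
        ∀ k ∈ K, ∃ α ∈ Rk k, ∀ i, i ∉ J → α i = 0)) :
    ∀ I J : Finset (Fin n), I.card < J.card →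
      ∃ k ∉ I, ∃ α ∈ Rk k, ∀ i, i ∉ J → α i = 0 := by
  suffices h : ∀ m (I J : Finset (Fin n)), J.card ≤ m → I.card < J.card →
      ∃ k ∉ I, ∃ α ∈ Rk k, ∀ i, i ∉ J → α i = 0 by
    exact fun I J hIJ => h J.card I J le_rfl hIJ
  intro m
  induction m with
  | zero => intro I J hJ hIJ; omega
  | succ m ih =>
    intro I J hJm hIJ
    have hJne : J.Nonempty := Finset.card_pos.mp (by omega)
    obtain ⟨j₀, hj₀⟩ := hJne
    have hd : 0 < d := lt_trans (hv j₀) (hvd j₀)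
    rcases hC1 J ⟨j₀, hj₀⟩ with ⟨α₀, hα₀R, hα₀supp⟩ | ⟨K, hKc, hKcard, hK⟩
    · -- R has an element supported in J
      by_cases hex : ∃ β ∈ R, (∀ i, i ∉ J → β i = 0) ∧ ∃ j, j ∉ I ∧ 0 < β j
      · -- some element of R supported in J has a positive coordinate outside I
        rcases hex with ⟨β, hβR, hβsupp, j, hjI, hβj⟩
        have hjJ : j ∈ J := by
          by_contra hjJ
          rw [hβsupp j hjJ] at hβj
          exact lt_irrefl 0 hβj
        set γ : Fin n → ℕ := fun i => β i - if i = j then 1 else 0 with hγ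
        have hβγ : β = fun i => γ i + if i = j then 1 else 0 := by
          funext i
          by_cases h : i = j
          · subst h; simp [hγ]; omega
          · simp [hγ, h]
        refine ⟨j, hjI, γ, ?_, ?_⟩
        · rw [hRk]
          constructor
          · have hsum := hR β hβR
            rw [hβγ] at hsum
            simp only [add_mul, Finset.sum_add_distrib, ite_mul, one_mul, zero_mul,
              Finset.sum_ite_eq', Finset.mem_univ, if_true] at hsum
            have := hvd j
            omega
          · rw [← hβγ]; exact hβR
        · intro i hi
          have hb := hβsupp i hi
          have : i ≠ j := fun h => (h ▸ hi) hjJ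
          simp [hγ, hb]
      · -- every element of R supported in J is supported in I ∩ J
        push_neg at hex
        -- I ∩ J is nonempty
        have hα₀sum := hR α₀ hα₀R
        have h0 : ∃ i, i ∈ I ∩ J ∧ α₀ i ≠ 0 := by
          by_contra hno
          push_neg at hno
          have : ∀ i : Fin n, α₀ i = 0 := by
            intro i
            by_cases hiJ : i ∈ J
            · by_cases hiI : i ∈ I
              · exact hno i (Finset.mem_inter.mpr ⟨hiI, hiJ⟩)
              · have := hex α₀ hα₀R hα₀supp i hiI
                omega
            · exact hα₀supp i hiJ
          rw [Finset.sum_eq_zero (fun i _ => by rw [this i, zero_mul])] at hα₀sum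
          omega
        obtain ⟨i₀, hi₀, hi₀ne⟩ := h0
        have hi₀I : i₀ ∈ I := (Finset.mem_inter.mp hi₀).1
        have hi₀J : i₀ ∈ J := (Finset.mem_inter.mp hi₀).2
        -- cardinalities
        have hcJ : (J \ I).card + (J ∩ I).card = J.card := Finset.card_sdiff_add_card_inter J I
        have hcI : (I \ J).card + (I ∩ J).card = I.card := Finset.card_sdiff_add_card_inter I J
        have hinter : (J ∩ I).card = (I ∩ J).card := by rw [Finset.inter_comm]
        have hi₀mem : i₀ ∈ J ∩ I := Finset.mem_inter.mpr ⟨hi₀J, hi₀I⟩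
        have hpos : 0 < (J ∩ I).card := Finset.card_pos.mpr ⟨i₀, hi₀mem⟩
        obtain ⟨k, hkI', α, hαRk, hαsupp⟩ :=
          ih (I \ J) (J \ I) (by omega) (by omega)
        by_cases hkI : k ∈ I
        · -- impossible: α would be zero
          exfalso
          have hkJ : k ∈ J := by
            by_contra hkJ
            exact hkI' (Finset.mem_sdiff.mpr ⟨hkI, hkJ⟩)
          have hβ := (hRk k α).mp hαRk
          set β : Fin n → ℕ := fun i => α i + if i = k then 1 else 0 with hβdef
          have hβR : β ∈ R := hβ.2
          have hβsupp : ∀ i, i ∉ J → β i = 0 := by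
            intro i hi
            have hik : i ≠ k := fun h => (h ▸ hi) hkJ
            have : i ∉ J \ I := fun h => hi (Finset.mem_sdiff.mp h).1
            simp [hβdef, hik, hαsupp i this]
          have hzero : ∀ i : Fin n, α i = 0 := by
            intro i
            by_cases hiJI : i ∈ J \ I
            · have hiI : i ∉ I := (Finset.mem_sdiff.mp hiJI).2
              have := hex β hβR hβsupp i hiI
              have hik : i ≠ k := fun h => hiI (h ▸ hkI)
              simp [hβdef, hik] at this
              exact this
            · exact hαsupp i hiJI
          have hsum := hβ.1
          rw [Finset.sum_eq_zero (fun i _ => by rw [hzero i, zero_mul])] at hsum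
          have := hvd k
          omega
        · refine ⟨k, hkI, α, hαRk, fun i hi => hαsupp i ?_⟩
          exact fun h => hi (Finset.mem_sdiff.mp h).1
    · -- second alternative of (C1)
      have : ∃ k ∈ K, k ∉ I := by
        by_contra hno
        push_neg at hno
        have : K ⊆ I := fun k hk => hno k hk
        have := Finset.card_le_card this
        omega
      obtain ⟨k, hkK, hkI⟩ := this
      obtain ⟨α, hα, hαsupp⟩ := hK k hkK
      exact ⟨k, hkI, α, hα, hαsupp⟩
end

section
/- Let (v1,...,vn,d) be positive integers with v_i < d. The rational function ρ_{(v,d)}(t) = ∏_{i=1}^n (t^d − t^{v_i})/(t^{v_i} − 1) is a polynomial with integer coefficients if and only if for every subset J ⊆ {1,...,n}, the number gcd(v_j : j ∈ J) divides at least |J| of the n numbers d − v_1, ..., d − v_n. -/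
/-!
Write `∏ (X^d - X^{v_i}) = X^{Σ v_i} ∏ (X^{d-v_i} - 1)`. The product `∏ (X^{v_i} - 1)` is monic and
prime to `X`, so the question is whether it divides `∏ (X^{d-v_i} - 1)`, which can be decided over `ℂ`.
There `X^a - 1` is separable with roots the `ζ` with `orderOf ζ ∣ a`, so comparing root
multiplicities turns divisibility into `#{i | m ∣ v_i} ≤ #{k | m ∣ d - v_k}` for every `m`.
This is the gcd condition: take `m = gcd_J v` in one direction and `J = {i | m ∣ v_i}` in the other.
-/

open Polynomial Finset

lemma prod_X_pow_sub_one_ne_zero {R : Type*} [CommRing R] [IsDomain R] {ι : Type*} [Fintype ι]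
    {a : ι → ℕ} (ha : ∀ i, a i ≠ 0) : ∏ i, (X ^ a i - 1 : R[X]) ≠ 0 :=
  prod_ne_zero_iff.mpr fun i _ => X_pow_sub_C_ne_zero (Nat.pos_of_ne_zero (ha i)) 1

section RootsOfUnity

variable {K : Type*} [Field K] [CharZero K] [DecidableEq K]

lemma count_roots_X_pow_sub_one {a : ℕ} (ha : a ≠ 0) (ζ : K) :
    (X ^ a - 1 : K[X]).roots.count ζ = if ζ ^ a = 1 then 1 else 0 := by
  have hne : (X ^ a - 1 : K[X]) ≠ 0 := X_pow_sub_C_ne_zero (Nat.pos_of_ne_zero ha) 1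
  split_ifs with h
  · refine le_antisymm ?_ ?_
    · exact count_roots_le_one (X_pow_sub_one_separable_iff.mpr (Nat.cast_ne_zero.mpr ha)) ζ
    · exact Multiset.one_le_count_iff_mem.mpr <| (mem_roots hne).mpr <| by simp [h]
  · refine Multiset.count_eq_zero.mpr fun hζ => h ?_
    simpa [sub_eq_zero] using (mem_roots hne).mp hζ

variable {ι : Type*} [Fintype ι]

lemma count_roots_prod_X_pow_sub_one {a : ι → ℕ} (ha : ∀ i, a i ≠ 0) (ζ : K) :
    (∏ i, (X ^ a i - 1 : K[X])).roots.count ζ = #{i | ζ ^ a i = 1} := by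
  rw [roots_prod _ _ (prod_X_pow_sub_one_ne_zero ha), Multiset.count_bind, card_filter]
  exact Finset.sum_congr rfl fun i _ => count_roots_X_pow_sub_one (ha i) ζ

lemma prod_X_pow_sub_one_dvd_iff_of_isAlgClosed [IsAlgClosed K] {a b : ι → ℕ}
    (ha : ∀ i, a i ≠ 0) (hb : ∀ i, b i ≠ 0) :
    (∏ i, (X ^ a i - 1 : K[X])) ∣ ∏ i, (X ^ b i - 1) ↔
      ∀ ζ : K, #{i | ζ ^ a i = 1} ≤ #{i | ζ ^ b i = 1} := by
  rw [IsAlgClosed.dvd_iff_roots_le_roots (prod_X_pow_sub_one_ne_zero ha)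
    (prod_X_pow_sub_one_ne_zero hb), Multiset.le_iff_count]
  simp only [count_roots_prod_X_pow_sub_one ha, count_roots_prod_X_pow_sub_one hb]

end RootsOfUnity

lemma prod_X_pow_sub_one_dvd_iff {ι : Type*} [Fintype ι] {a b : ι → ℕ}
    (ha : ∀ i, a i ≠ 0) (hb : ∀ i, b i ≠ 0) :
    (∏ i, (X ^ a i - 1 : ℤ[X])) ∣ ∏ i, (X ^ b i - 1) ↔
      ∀ m, #{i | m ∣ a i} ≤ #{i | m ∣ b i} := by
  classical
  have hmonic : (∏ i, (X ^ a i - 1 : ℤ[X])).Monic :=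
    monic_prod_of_monic _ _ fun i _ => by simpa using monic_X_pow_sub_C (1 : ℤ) (ha i)
  rw [← map_dvd_map (Int.castRingHom ℂ) (RingHom.injective_int _) hmonic]
  simp only [Polynomial.map_prod, Polynomial.map_sub, Polynomial.map_pow, map_X, Polynomial.map_one]
  rw [prod_X_pow_sub_one_dvd_iff_of_isAlgClosed ha hb]
  -- `orderOf ζ = 0` for `ζ` not a root of unity, and `m = 0` divides no `a i`.
  simp only [← orderOf_dvd_iff_pow_eq_one]
  refine ⟨fun h m => ?_, fun h ζ => h (orderOf ζ)⟩
  rcases Nat.eq_zero_or_pos m with rfl | hm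
  · simp [ha]
  · simpa [((Complex.isPrimitiveRoot_exp m hm.ne').eq_orderOf).symm] using
      h (Complex.exp (2 * Real.pi * Complex.I / m))

lemma forall_card_le_card_filter_gcd_dvd_iff {ι : Type*} [Fintype ι] [DecidableEq ι]
    (v w : ι → ℕ) :
    (∀ J : Finset ι, #J ≤ #{k | J.gcd v ∣ w k}) ↔ ∀ m, #{i | m ∣ v i} ≤ #{k | m ∣ w k} := by
  constructor
  · intro h m
    have hm : m ∣ gcd {i | m ∣ v i} v := Finset.dvd_gcd fun i hi => (mem_filter.mp hi).2
    exact (h _).trans <| card_le_card <| monotone_filter_right _ fun k _ hk => hm.trans hk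
  · intro h J
    have hJ : J ⊆ ({i | J.gcd v ∣ v i} : Finset ι) := fun j hj =>
      mem_filter.mpr ⟨mem_univ _, gcd_dvd hj⟩
    exact (card_le_card hJ).trans (h _)

lemma isCoprime_X_pow_sub_one_X {R : Type*} [CommRing R] {a : ℕ} (ha : a ≠ 0) :
    IsCoprime (X ^ a - 1 : R[X]) X :=
  ⟨-1, X ^ (a - 1), by rw [← pow_succ, Nat.sub_add_cancel (Nat.pos_of_ne_zero ha)]; ring⟩

lemma prod_X_pow_sub_X_pow {R : Type*} [CommRing R] {ι : Type*} [Fintype ι] {v : ι → ℕ} {d : ℕ}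
    (hvd : ∀ i, v i ≤ d) :
    ∏ i, (X ^ d - X ^ v i : R[X]) = X ^ (∑ i, v i) * ∏ i, (X ^ (d - v i) - 1) := by
  rw [← prod_pow_eq_pow_sum, ← prod_mul_distrib]
  refine prod_congr rfl fun i _ => ?_
  rw [mul_sub, mul_one, ← pow_add, Nat.add_sub_cancel' (hvd i)]

theorem stmt15 (n : ℕ) (v : Fin n → ℕ) (d : ℕ)
    (hv : ∀ i, 0 < v i) (hvd : ∀ i, v i < d) :
    (∃ p : Polynomial ℤ,
      ∏ i, ((X : Polynomial ℤ) ^ d - X ^ (v i)) = p * ∏ i, ((X : Polynomial ℤ) ^ (v i) - 1)) ↔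
    ∀ J : Finset (Fin n),
      J.card ≤ (Finset.univ.filter (fun k => Finset.gcd J v ∣ (d - v k))).card := by
  have hv₀ : ∀ i, v i ≠ 0 := fun i => (hv i).ne'
  have hcop : IsCoprime (∏ i, (X ^ v i - 1 : ℤ[X])) (X ^ ∑ i, v i) :=
    (IsCoprime.prod_left fun i _ => isCoprime_X_pow_sub_one_X (hv₀ i)).pow_right
  have hcancel : ∀ P, ∏ i, (X ^ v i - 1 : ℤ[X]) ∣ X ^ (∑ i, v i) * P ↔
      ∏ i, (X ^ v i - 1 : ℤ[X]) ∣ P :=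
    fun P => ⟨hcop.dvd_of_dvd_mul_left, (dvd_mul_of_dvd_right · _)⟩
  rw [← dvd_iff_exists_eq_mul_left, prod_X_pow_sub_X_pow fun i => (hvd i).le, hcancel,
    prod_X_pow_sub_one_dvd_iff hv₀ fun i => Nat.sub_ne_zero_of_lt (hvd i),
    forall_card_le_card_filter_gcd_dvd_iff]
end

section
/- Let (v1, v2, v3, d) be positive integers with v_i < d such that: v1 divides d − v3, v2 divides d − v3, and gcd(v1, v2) divides d. Then there exist nonnegative integers a, b with a·v1 + b·v2 = d. -/
/-- Sylvester's bound for two arbitrary generators: dividing out `g = gcd a b` reduces it to the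
coprime bound `(a / g - 1) * (b / g - 1) ≤ c / g`. -/
theorem Nat.exists_mul_add_mul_eq_of_gcd_dvd_of_lcm_add_gcd_le {a b c : ℕ}
    (hdvd : Nat.gcd a b ∣ c) (hle : Nat.lcm a b + Nat.gcd a b ≤ c + a + b) :
    ∃ x y : ℕ, x * a + y * b = c := by
  rcases Nat.eq_zero_or_pos (Nat.gcd a b) with hg | hg
  · obtain ⟨rfl, rfl⟩ := Nat.gcd_eq_zero_iff.mp hg
    exact ⟨0, 0, by simp_all⟩
  obtain ⟨g, m, n, hg0, hmn, rfl, rfl⟩ := Nat.exists_coprime' hg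
  have hgcd : Nat.gcd (m * g) (n * g) = g := by rw [Nat.gcd_mul_right, hmn.gcd_eq_one, one_mul]
  rw [hgcd] at hdvd hle
  obtain ⟨e, rfl⟩ := hdvd
  rw [Nat.lcm_mul_right, hmn.lcm_eq_mul] at hle
  have hbound : m * n + 1 ≤ e + m + n := Nat.le_of_mul_le_mul_right (by linarith) hg0
  have hpred : m.pred * n.pred ≤ e := by
    cases m <;> cases n <;> simp only [Nat.pred_succ, Nat.pred_zero, zero_mul, mul_zero,
      Nat.zero_le]
    ring_nf at hbound
    omega
  obtain ⟨x, y, hxy⟩ :=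
    Nat.exists_add_mul_eq_of_gcd_dvd_of_mul_pred_le m n e (by simp [hmn.gcd_eq_one]) hpred
  exact ⟨x, y, by rw [← hxy]; ring⟩

theorem stmt16_general (v1 v2 v3 d : ℕ) (h1 : 0 < v1) (hd3 : v3 < d)
    (hdiv1 : v1 ∣ d - v3) (hdiv2 : v2 ∣ d - v3)
    (hgcd : Nat.gcd v1 v2 ∣ d) :
    ∃ a b : ℕ, a * v1 + b * v2 = d := by
  have hlcm : Nat.lcm v1 v2 ≤ d - v3 :=
    Nat.le_of_dvd (Nat.sub_pos_of_lt hd3) (Nat.lcm_dvd hdiv1 hdiv2)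
  have hgcd_le : Nat.gcd v1 v2 ≤ v1 := Nat.gcd_le_left v2 h1
  exact Nat.exists_mul_add_mul_eq_of_gcd_dvd_of_lcm_add_gcd_le hgcd (by omega)

theorem stmt16 (v1 v2 v3 d : ℕ) (h1 : 0 < v1) (h2 : 0 < v2) (h3 : 0 < v3)
    (hd1 : v1 < d) (hd2 : v2 < d) (hd3 : v3 < d)
    (hdiv1 : v1 ∣ d - v3) (hdiv2 : v2 ∣ d - v3)
    (hgcd : Nat.gcd v1 v2 ∣ d) :
    ∃ a b : ℕ, a * v1 + b * v2 = d :=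
  stmt16_general v1 v2 v3 d h1 hd3 hdiv1 hdiv2 hgcd
end
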